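/- Let X be a Banach space and R a bounded operator such that Rx and Tx are linearly dependent for every x ∈ X, where T is a fixed bounded operator of rank at least 2. Then R = λT for some scalar λ. -/
import Mathlib

/-- If `T` is a bounded operator of rank at least 2 on a complex Banach space `X` and `R`
is a bounded operator such that `Rx` and `Tx` are linearly dependent for every `x ∈ X`,
then `R = λT` for some scalar `λ`. -/
theorem stmt_11 (X : Type*) [NormedAddCommGroup X] [NormedSpace ℂ X] [CompleteSpace X]
    (T R : X →L[ℂ] X) (hrank : 2 ≤ Module.rank ℂ (LinearMap.range (T : X →ₗ[ℂ] X)))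
    (h : ∀ x : X, ¬ LinearIndependent ℂ ![R x, T x]) :
    ∃ l : ℂ, R = l • T := by
  -- Step 0: local dependence
  have hdep : ∀ x : X, T x = 0 ∨ ∃ a : ℂ, R x = a • T x := by
    intro x
    by_cases hT : T x = 0
    · exact Or.inl hT
    · right
      have := h x
      rw [linearIndependent_fin2] at this
      push_neg at this
      simp only [Matrix.cons_val_one, Matrix.head_cons, Matrix.cons_val_zero] at this
      obtain ⟨a, ha⟩ := this hT
      exact ⟨a, ha.symm⟩
  -- Step 1: find u v with T u, T v linearly independent
  have hexist : ∃ u v : X, LinearIndependent ℂ ![T u, T v] := by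
    by_contra hc
    push_neg at hc
    have hle : Module.rank ℂ (LinearMap.range (T : X →ₗ[ℂ] X)) ≤ 1 := by
      rw [rank_le_one_iff]
      by_cases hz : ∀ x : X, T x = 0
      · refine ⟨0, ?_⟩
        rintro ⟨_, z, rfl⟩
        exact ⟨0, by ext; simp [hz z]⟩
      · push_neg at hz
        obtain ⟨u, hu⟩ := hz
        refine ⟨⟨T u, ⟨u, rfl⟩⟩, ?_⟩
        rintro ⟨_, z, rfl⟩
        have := hc z u
        rw [linearIndependent_fin2] at this
        push_neg at this
        simp only [Matrix.cons_val_one, Matrix.head_cons, Matrix.cons_val_zero] at this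
        obtain ⟨a, ha⟩ := this hu
        exact ⟨a, by ext; simpa using ha⟩
    exact absurd (hrank.trans hle) (by norm_num)
  obtain ⟨u, v, huv⟩ := hexist
  have hpair : ∀ s t : ℂ, s • T u + t • T v = 0 → s = 0 ∧ t = 0 :=
    LinearIndependent.pair_iff.1 huv
  have hTu : T u ≠ 0 := by have := huv.ne_zero 0; simpa using this
  have hTv : T v ≠ 0 := by have := huv.ne_zero 1; simpa using this
  -- uniqueness of coefficients
  have huniq : ∀ x : X, T x ≠ 0 → ∀ a b : ℂ, R x = a • T x → R x = b • T x → a = b := by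
    intro x hx a b ha hb
    have : (a - b) • T x = 0 := by rw [sub_smul, ← ha, ← hb, sub_self]
    rcases smul_eq_zero.1 this with h' | h'
    · exact sub_eq_zero.1 h'
    · exact absurd h' hx
  -- coefficient on vectors with independent images, additivity key
  have key : ∀ x y : X, LinearIndependent ℂ ![T x, T y] →
      ∀ a b c : ℂ, R x = a • T x → R y = b • T y → R (x + y) = c • T (x + y) →
      a = c ∧ b = c := by
    intro x y hxy a b c ha hb hc
    have hp := LinearIndependent.pair_iff.1 hxy
    have heq : (a - c) • T x + (b - c) • T y = 0 := by
      have h1 : R (x + y) = R x + R y := by simp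
      have h2 : T (x + y) = T x + T y := by simp
      rw [h1, ha, hb, h2, smul_add] at hc
      have := sub_eq_zero.2 hc
      rw [sub_smul, sub_smul]
      abel_nf
      abel_nf at this
      linear_combination (norm := module) this
    obtain ⟨h1, h2⟩ := hp _ _ heq
    exact ⟨sub_eq_zero.1 h1, sub_eq_zero.1 h2⟩
  -- coefficient function where T x ≠ 0
  obtain ⟨au, hau⟩ := (hdep u).resolve_left hTu
  obtain ⟨av, hav⟩ := (hdep v).resolve_left hTv
  have hTuv : T (u + v) ≠ 0 := by
    intro h0
    have : (1 : ℂ) • T u + (1 : ℂ) • T v = 0 := by simpa using h0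
    exact one_ne_zero (hpair 1 1 this).1
  obtain ⟨auv, hauv⟩ := (hdep (u + v)).resolve_left hTuv
  have hav_eq : av = au := by
    obtain ⟨e1, e2⟩ := key u v huv au av auv hau hav hauv
    rw [e2, e1]
  -- claim: for all x with T x ≠ 0 and coefficient a, a = au
  have main : ∀ x : X, ∀ a : ℂ, T x ≠ 0 → R x = a • T x → a = au := by
    intro x a hx ha
    by_cases hind : LinearIndependent ℂ ![T x, T u]
    · have hTxu : T (x + u) ≠ 0 := by
        intro h0
        have : (1 : ℂ) • T x + (1 : ℂ) • T u = 0 := by simpa using h0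
        exact one_ne_zero ((LinearIndependent.pair_iff.1 hind) 1 1 this).1
      obtain ⟨c, hc⟩ := (hdep (x + u)).resolve_left hTxu
      obtain ⟨e1, e2⟩ := key x u hind a au c ha hau hc
      rw [e1, ← e2]
    · -- T x dependent with T u, hence independent with T v
      rw [linearIndependent_fin2] at hind
      push_neg at hind
      simp only [Matrix.cons_val_one, Matrix.head_cons, Matrix.cons_val_zero] at hind
      obtain ⟨r, hr⟩ := hind hTu
      have hr0 : r ≠ 0 := by
        intro h0; rw [h0, zero_smul] at hr; exact hx hr.symm
      have hxv : LinearIndependent ℂ ![T x, T v] := by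
        rw [LinearIndependent.pair_iff]
        intro s t hst
        rw [← hr, smul_smul] at hst
        obtain ⟨e1, e2⟩ := hpair (s * r) t hst
        exact ⟨(mul_eq_zero.1 e1).resolve_right hr0, e2⟩
      have hTxv : T (x + v) ≠ 0 := by
        intro h0
        have : (1 : ℂ) • T x + (1 : ℂ) • T v = 0 := by simpa using h0
        exact one_ne_zero ((LinearIndependent.pair_iff.1 hxv) 1 1 this).1
      obtain ⟨c, hc⟩ := (hdep (x + v)).resolve_left hTxv
      obtain ⟨e1, e2⟩ := key x v hxv a av c ha hav hc
      rw [e1, ← e2, hav_eq]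
  refine ⟨au, ?_⟩
  ext x
  simp only [ContinuousLinearMap.smul_apply]
  rcases hdep x with hx0 | ⟨a, ha⟩
  · -- show R x = 0
    rw [hx0, smul_zero]
    have hu' : T (x + u) ≠ 0 := by rw [map_add, hx0, zero_add]; exact hTu
    have hv' : T (x + v) ≠ 0 := by rw [map_add, hx0, zero_add]; exact hTv
    obtain ⟨c, hc⟩ := (hdep (x + u)).resolve_left hu'
    obtain ⟨d, hd⟩ := (hdep (x + v)).resolve_left hv'
    simp only [map_add, hx0, zero_add] at hc hd
    have hRx1 : R x = (c - au) • T u := by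
      rw [sub_smul, ← hau, ← hc]; abel
    have hRx2 : R x = (d - av) • T v := by
      rw [sub_smul, ← hav, ← hd]; abel
    have : (c - au) • T u + (-(d - av)) • T v = 0 := by
      rw [neg_smul, ← hRx1, ← hRx2]; abel
    have := (hpair _ _ this).1
    rw [hRx1, this, zero_smul]
  · by_cases hx : T x = 0
    · rw [hx, smul_zero, ha, hx, smul_zero]
    · rw [ha, main x a hx ha]
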